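/- Fix an integer k ≥ 2 and real numbers 0 = a_0 < a_1 < ⋯ < a_{k−1}. Let A, B be PMFs on a countable type Γ, and let P, Q be PMFs on a countable type Ω such that: (a) for every ω with P(ω) > 0, either Q(ω) = 0 or there exists i ∈ {1, …, k−1} with P(ω) = a_i·Q(ω); and (b) D_α(A‖B) ≤ D_α(P‖Q) for all real α ≥ 0. Then: for every i ∈ {1, …, k−1} and every real α with a_{i−1} ≤ α ≤ a_i, ((a_i − α)·D_{a_{i−1}}(A‖B) + (α − a_{i−1})·D_{a_i}(A‖B))/(a_i − a_{i−1}) ≤ D_α(P‖Q); and for every real α ≥ a_{k−1}, ∑_{γ : B(γ) = 0} A(γ) ≤ D_α(P‖Q). That is, any pessimistic estimate with privacy loss distribution supported on the grid dominates the 'connect-the-dots' piecewise-linear interpolation of the hockey-stick curve of (A, B). -/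

import Mathlib

/-!
On the interval `[s, t]` the hinge `α ↦ max (p - α q) 0` (with `q ≥ 0`) is affine unless its
kink `p / q` lies strictly inside `(s, t)`. The grid condition keeps every kink of `(P, Q)` off
the open intervals `(a (i-1), a i)`, so `α ↦ D_α(P‖Q)` is affine on each of them, and the
domination at the two endpoints passes to the chord of `(A, B)`. Beyond the last grid point,
the mass of `A` where `B` vanishes is a lower bound for every hockey-stick divergence of
`(A, B)`, hence of `(P, Q)`.
-/

/-- The α-hockey-stick divergence between two PMFs. -/
noncomputable def hsDiv {Ω : Type*} (α : ℝ) (P Q : PMF Ω) : ℝ :=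
  ∑' ω, max ((P ω).toReal - α * (Q ω).toReal) 0

theorem PMF.summable_toReal {Ω : Type*} (P : PMF Ω) : Summable fun ω => (P ω).toReal :=
  ENNReal.summable_toReal (by simp [P.tsum_coe])

theorem summable_hsDiv_summand {Ω : Type*} (α : ℝ) (P Q : PMF Ω) :
    Summable fun ω => max ((P ω).toReal - α * (Q ω).toReal) 0 :=
  (P.summable_toReal.sub (Q.summable_toReal.mul_left α)).abs.of_nonneg_of_le
    (fun _ => le_max_right _ _) (fun _ => max_le (le_abs_self _) (abs_nonneg _))

theorem hinge_affine_of_kink_notMem {p q s t α : ℝ} (hq : 0 ≤ q) (hsα : s ≤ α) (hαt : α ≤ t)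
    (hkink : p ≤ s * q ∨ t * q ≤ p) :
    (t - s) * max (p - α * q) 0
      = (t - α) * max (p - s * q) 0 + (α - s) * max (p - t * q) 0 := by
  rcases hkink with h | h
  · rw [max_eq_right (by nlinarith), max_eq_right (by nlinarith), max_eq_right (by nlinarith)]
    ring
  · rw [max_eq_left (by nlinarith), max_eq_left (by nlinarith), max_eq_left (by nlinarith)]
    ring

theorem hsDiv_affine_of_kink_notMem {Ω : Type*} {P Q : PMF Ω} {s t α : ℝ}
    (hsα : s ≤ α) (hαt : α ≤ t)
    (hkink : ∀ ω, (P ω).toReal ≤ s * (Q ω).toReal ∨ t * (Q ω).toReal ≤ (P ω).toReal) :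
    (t - s) * hsDiv α P Q = (t - α) * hsDiv s P Q + (α - s) * hsDiv t P Q := by
  simp only [hsDiv, ← tsum_mul_left]
  rw [← Summable.tsum_add ((summable_hsDiv_summand s P Q).mul_left _)
    ((summable_hsDiv_summand t P Q).mul_left _)]
  exact tsum_congr fun ω =>
    hinge_affine_of_kink_notMem ENNReal.toReal_nonneg hsα hαt (hkink ω)

theorem chord_le_hsDiv_of_kink_notMem {Γ Ω : Type*} {A B : PMF Γ} {P Q : PMF Ω} {s t α : ℝ}
    (hst : s < t) (hsα : s ≤ α) (hαt : α ≤ t)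
    (hkink : ∀ ω, (P ω).toReal ≤ s * (Q ω).toReal ∨ t * (Q ω).toReal ≤ (P ω).toReal)
    (hs : hsDiv s A B ≤ hsDiv s P Q) (ht : hsDiv t A B ≤ hsDiv t P Q) :
    ((t - α) * hsDiv s A B + (α - s) * hsDiv t A B) / (t - s) ≤ hsDiv α P Q := by
  rw [div_le_iff₀ (sub_pos.mpr hst), mul_comm _ (t - s),
    hsDiv_affine_of_kink_notMem hsα hαt hkink]
  gcongr

theorem tsum_toReal_zero_le_hsDiv {Γ : Type*} (α : ℝ) (A B : PMF Γ) :
    ∑' γ : {γ : Γ // B γ = 0}, (A γ.1).toReal ≤ hsDiv α A B :=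
  Summable.tsum_le_tsum_of_inj Subtype.val Subtype.val_injective
    (fun _ _ => le_max_right _ _)
    (fun γ => by simp [γ.2])
    (A.summable_toReal.subtype _) (summable_hsDiv_summand α A B)

theorem le_mul_or_mul_le_of_grid {Ω : Type*} {P Q : PMF Ω} {a : ℕ → ℝ} {n i : ℕ}
    (hmono : MonotoneOn a (Set.Iic n)) (hin : i + 1 ≤ n) (hai : 0 ≤ a i)
    (hgrid : ∀ ω, 0 < P ω → Q ω = 0 ∨ ∃ j ≤ n, (P ω).toReal = a j * (Q ω).toReal) (ω : Ω) :
    (P ω).toReal ≤ a i * (Q ω).toReal ∨ a (i + 1) * (Q ω).toReal ≤ (P ω).toReal := by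
  rcases eq_zero_or_pos (P ω) with hP | hP
  · exact .inl (by simp only [hP, ENNReal.toReal_zero]; positivity)
  rcases hgrid ω hP with hQ | ⟨j, hjn, hPQ⟩
  · exact .inr (by simp [hQ])
  rw [hPQ]
  rcases Nat.lt_or_ge i j with hij | hji
  · exact .inr (mul_le_mul_of_nonneg_right (hmono (by simpa using hin) hjn hij)
      ENNReal.toReal_nonneg)
  · exact .inl (mul_le_mul_of_nonneg_right (hmono (by simp; omega) (by simp; omega) hji)
      ENNReal.toReal_nonneg)

theorem pessimistic_estimate_is_best_general {Γ Ω : Type*}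
    {k : ℕ}
    (a : ℕ → ℝ) (ha0 : a 0 = 0) (hamono : ∀ i, i < k - 1 → a i < a (i + 1))
    (A B : PMF Γ) (P Q : PMF Ω)
    (hsupp : ∀ ω, 0 < P ω →
      Q ω = 0 ∨ ∃ i, 1 ≤ i ∧ i ≤ k - 1 ∧ (P ω).toReal = a i * (Q ω).toReal)
    (hdom : ∀ α : ℝ, 0 ≤ α → hsDiv α A B ≤ hsDiv α P Q) :
    (∀ i, 1 ≤ i → i ≤ k - 1 → ∀ α : ℝ, a (i - 1) ≤ α → α ≤ a i →
      ((a i - α) * hsDiv (a (i - 1)) A B + (α - a (i - 1)) * hsDiv (a i) A B)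
          / (a i - a (i - 1)) ≤ hsDiv α P Q) ∧
    (∀ α : ℝ, a (k - 1) ≤ α →
      (∑' γ : {γ : Γ // B γ = 0}, (A γ.1).toReal) ≤ hsDiv α P Q) := by
  have hmono : StrictMonoOn a (Set.Iic (k - 1)) := strictMonoOn_Iic_of_lt_succ hamono
  have hnonneg : ∀ i ≤ k - 1, 0 ≤ a i := fun i hi =>
    ha0 ▸ hmono.monotoneOn (Nat.zero_le _) hi (Nat.zero_le i)
  have hgrid : ∀ ω, 0 < P ω → Q ω = 0 ∨ ∃ j ≤ k - 1, (P ω).toReal = a j * (Q ω).toReal :=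
    fun ω hP => (hsupp ω hP).imp_right fun ⟨j, _, hjk, hPQ⟩ => ⟨j, hjk, hPQ⟩
  refine ⟨fun i hi hik α hsα hαt => ?_, fun α hα => ?_⟩
  · obtain ⟨i, rfl⟩ := Nat.exists_eq_add_of_le' hi
    rw [Nat.add_sub_cancel] at hsα ⊢
    have hai := hnonneg i (by omega)
    exact chord_le_hsDiv_of_kink_notMem (hmono (by simp; omega) hik (by omega)) hsα hαt
      (le_mul_or_mul_le_of_grid hmono.monotoneOn hik hai hgrid)
      (hdom _ hai) (hdom _ (by linarith))
  · exact (tsum_toReal_zero_le_hsDiv α A B).trans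
      (hdom α ((hnonneg (k - 1) le_rfl).trans hα))

/-- Optimality of the connect-the-dots pessimistic estimate: any pair `(P, Q)` whose
privacy loss distribution is supported on the grid `{a 1, …, a (k-1)} ∪ {+∞}` and
which dominates `(A, B)` must dominate the piecewise-linear interpolation of the
hockey-stick curve of `(A, B)` on the grid. -/
theorem pessimistic_estimate_is_best {Γ Ω : Type*} [Countable Γ] [Countable Ω]
    {k : ℕ} (hk : 2 ≤ k)
    (a : ℕ → ℝ) (ha0 : a 0 = 0) (hamono : ∀ i, i < k - 1 → a i < a (i + 1))
    (A B : PMF Γ) (P Q : PMF Ω)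
    (hsupp : ∀ ω, 0 < P ω →
      Q ω = 0 ∨ ∃ i, 1 ≤ i ∧ i ≤ k - 1 ∧ (P ω).toReal = a i * (Q ω).toReal)
    (hdom : ∀ α : ℝ, 0 ≤ α → hsDiv α A B ≤ hsDiv α P Q) :
    (∀ i, 1 ≤ i → i ≤ k - 1 → ∀ α : ℝ, a (i - 1) ≤ α → α ≤ a i →
      ((a i - α) * hsDiv (a (i - 1)) A B + (α - a (i - 1)) * hsDiv (a i) A B)
          / (a i - a (i - 1)) ≤ hsDiv α P Q) ∧
    (∀ α : ℝ, a (k - 1) ≤ α →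
      (∑' γ : {γ : Γ // B γ = 0}, (A γ.1).toReal) ≤ hsDiv α P Q) :=
  pessimistic_estimate_is_best_general a ha0 hamono A B P Q hsupp hdom
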